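/- Let n ≥ 2 be an integer and set z = (2 − n²)/n < 0. Then the periodic simple continued fraction [0; \overline{n−1, 1, n−1}] (the value of the infinite continued fraction [0, n−1, 1, n−1, n−1, 1, n−1, n−1, 1, n−1, …] with repeating block (n−1, 1, n−1)) converges, the periodic continued fraction [0, \overline{(n²−2)/n}] = [0, (n²−2)/n, (n²−2)/n, …] converges, and both are equal to (z + √(z² + 4))/2. -/

import Mathlib

/-- The value of the finite continued fraction `[z₁,…,zₙ] = z₁ + 1/(z₂ + 1/(⋯ + 1/zₙ))`
of real numbers. -/
noncomputable def cfVal : List ℝ → ℝ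
  | [] => 0
  | [x] => x
  | x :: y :: t => x + (cfVal (y :: t))⁻¹

/-- Auxiliary: the continued fraction `[a₁,…,aₘ, continuation s]`. -/
noncomputable def cfAux : List ℝ → ℝ → ℝ
  | [], s => s
  | a :: l, s => a + (cfAux l s)⁻¹

lemma cfVal_cons (x : ℝ) (l : List ℝ) (h : l ≠ []) :
    cfVal (x :: l) = x + (cfVal l)⁻¹ := by
  cases l with
  | nil => simp at h
  | cons y t => simp [cfVal]

lemma cfAux_append (l : List ℝ) (a s : ℝ) :
    cfAux (l ++ [a]) s = cfAux l (a + s⁻¹) := by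
  induction l with
  | nil => simp [cfAux]
  | cons b l ih => simp [cfAux, ih]

lemma cfVal_append_singleton (l : List ℝ) (s : ℝ) :
    cfVal (l ++ [s]) = cfAux l s := by
  induction l with
  | nil => simp [cfVal, cfAux]
  | cons a l ih =>
    rw [List.cons_append, cfVal_cons _ _ (by simp), ih]
    rfl

lemma cfAux_bounds (B : ℝ) (hB : 1 ≤ B) :
    ∀ l : List ℝ, (∀ a ∈ l, 1 ≤ a ∧ a ≤ B) → ∀ s : ℝ, 1 ≤ s → s ≤ B + 1 →
      1 ≤ cfAux l s ∧ cfAux l s ≤ B + 1 := by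
  intro l
  induction l with
  | nil => intro _ s h1 h2; exact ⟨h1, h2⟩
  | cons a l ih =>
    intro hmem s h1 h2
    have ha := hmem a (by simp)
    have hl := ih (fun b hb => hmem b (by simp [hb])) s h1 h2
    have h0 : (0:ℝ) < cfAux l s := lt_of_lt_of_le one_pos hl.1
    have hinv1 : (cfAux l s)⁻¹ ≤ 1 := by
      rw [inv_le_one_iff₀]; right; exact hl.1
    have hinv0 : 0 < (cfAux l s)⁻¹ := inv_pos.mpr h0
    constructor
    · show 1 ≤ a + (cfAux l s)⁻¹
      linarith [ha.1]
    · show a + (cfAux l s)⁻¹ ≤ B + 1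
      linarith [ha.2]

lemma cfAux_cons_lb (B : ℝ) (hB : 1 ≤ B) (a : ℝ) (l : List ℝ)
    (hmem : ∀ b ∈ a :: l, 1 ≤ b ∧ b ≤ B) (s : ℝ) (h1 : 1 ≤ s) (h2 : s ≤ B + 1) :
    (B + 2) / (B + 1) ≤ cfAux (a :: l) s := by
  have hl := cfAux_bounds B hB l (fun b hb => hmem b (by simp [hb])) s h1 h2
  have ha := hmem a (by simp)
  have h0 : (0:ℝ) < cfAux l s := lt_of_lt_of_le one_pos hl.1
  have hinv : (B+1)⁻¹ ≤ (cfAux l s)⁻¹ := inv_anti₀ h0 hl.2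
  show (B + 2) / (B + 1) ≤ a + (cfAux l s)⁻¹
  have hB1 : (0:ℝ) < B + 1 := by linarith
  have heq : (B+2)/(B+1) = 1 + (B+1)⁻¹ := by
    field_simp
    ring
  rw [heq]
  linarith [ha.1]

lemma cfAux_contract (B : ℝ) (hB : 1 ≤ B) :
    ∀ l : List ℝ, (∀ a ∈ l, 1 ≤ a ∧ a ≤ B) → ∀ s t : ℝ,
      1 ≤ s → s ≤ B + 1 → 1 ≤ t → t ≤ B + 1 →
      |cfAux l s - cfAux l t| ≤ ((B+1)/(B+2)) ^ (2 * (l.length - 1)) * |s - t| := by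
  intro l
  induction l with
  | nil => intro _ s t _ _ _ _; simp [cfAux]
  | cons a l ih =>
    intro hmem s t hs1 hs2 ht1 ht2
    have hmem' : ∀ b ∈ l, 1 ≤ b ∧ b ≤ B := fun b hb => hmem b (by simp [hb])
    have hP := cfAux_bounds B hB l hmem' s hs1 hs2
    have hQ := cfAux_bounds B hB l hmem' t ht1 ht2
    set P := cfAux l s with hPd
    set Q := cfAux l t with hQd
    have hP0 : (0:ℝ) < P := lt_of_lt_of_le one_pos hP.1
    have hQ0 : (0:ℝ) < Q := lt_of_lt_of_le one_pos hQ.1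
    have hdiff : cfAux (a :: l) s - cfAux (a :: l) t = (Q - P) / (P * Q) := by
      show (a + P⁻¹) - (a + Q⁻¹) = _
      field_simp
      ring
    rw [hdiff, abs_div, abs_of_pos (mul_pos hP0 hQ0)]
    cases l with
    | nil =>
      simp only [cfAux] at hPd hQd
      simp only [List.length_cons, List.length_nil]
      rw [hPd, hQd]
      norm_num
      rw [abs_sub_comm, div_le_iff₀ (by nlinarith : (0:ℝ) < s * t)]
      nlinarith [abs_nonneg (s - t), (show (1:ℝ) ≤ s * t by nlinarith)]
    | cons b l' =>
      have hc : (B + 2) / (B + 1) ≤ P := cfAux_cons_lb B hB b l' hmem' s hs1 hs2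
      have hcQ : (B + 2) / (B + 1) ≤ Q := cfAux_cons_lb B hB b l' hmem' t ht1 ht2
      have ihPQ := ih hmem' s t hs1 hs2 ht1 ht2
      rw [← hPd, ← hQd] at ihPQ
      have hB2 : (0:ℝ) < B + 2 := by linarith
      have hB1 : (0:ℝ) < B + 1 := by linarith
      have hρ : (0:ℝ) < (B+1)/(B+2) := by positivity
      have hPQ : ((B+2)/(B+1))^2 ≤ P * Q := by nlinarith [div_pos hB2 hB1]
      have key : |Q - P| / (P * Q) ≤ ((B+1)/(B+2))^2 * |Q - P| := by
        rw [div_le_iff₀ (mul_pos hP0 hQ0)]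
        have h1 : ((B+1)/(B+2))^2 * ((B+2)/(B+1))^2 = 1 := by
          field_simp
        nlinarith [abs_nonneg (Q - P), mul_le_mul_of_nonneg_left hPQ
          (mul_nonneg (abs_nonneg (Q-P)) (le_of_lt (pow_pos hρ 2)))]
      calc |Q - P| / (P * Q) ≤ ((B+1)/(B+2))^2 * |Q - P| := key
        _ = ((B+1)/(B+2))^2 * |P - Q| := by rw [abs_sub_comm]
        _ ≤ ((B+1)/(B+2))^2 * (((B+1)/(B+2)) ^ (2 * (l'.length + 1 - 1)) * |s - t|) := by
            apply mul_le_mul_of_nonneg_left _ (le_of_lt (pow_pos hρ 2))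
            simpa using ihPQ
        _ ≤ ((B+1)/(B+2)) ^ (2 * ((b :: l').length + 1 - 1)) * |s - t| := by
            rw [← mul_assoc, ← pow_add]
            apply le_of_eq
            congr 1
            simp [List.length_cons]
            ring

lemma cf_tendsto (B : ℝ) (hB : 1 ≤ B) (f : ℕ → ℝ) (v : ℕ → ℝ)
    (hf0 : f 0 = 0)
    (he1 : ∀ j, 1 ≤ f (j + 1)) (he2 : ∀ j, f (j + 1) ≤ B)
    (hv : ∀ j, v j = f (j + 1) + (v (j + 1))⁻¹) (hv1 : ∀ j, 1 ≤ v j) :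
    Filter.Tendsto (fun m => cfVal ((List.range (m + 1)).map f)) Filter.atTop
      (nhds (v 0)⁻¹) := by
  set e : ℕ → ℝ := fun j => f (j + 1) with he
  have hv2 : ∀ j, v j ≤ B + 1 := by
    intro j
    have h1 := hv1 (j + 1)
    have hp : (0:ℝ) < v (j + 1) := lt_of_lt_of_le one_pos h1
    have hle : (v (j + 1))⁻¹ ≤ 1 := by
      rw [inv_le_one_iff₀]; right; exact h1
    rw [hv j]
    linarith [he2 j]
  have hmem : ∀ m : ℕ, ∀ a ∈ (List.range m).map e, 1 ≤ a ∧ a ≤ B := by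
    intro m a ha
    simp only [List.mem_map, List.mem_range] at ha
    obtain ⟨j, _, rfl⟩ := ha
    exact ⟨he1 j, he2 j⟩
  have hfix : ∀ m, cfAux ((List.range m).map e) (v m) = v 0 := by
    intro m
    induction m with
    | zero => simp [cfAux]
    | succ m ih =>
      rw [List.range_succ, List.map_append, List.map_cons, List.map_nil, cfAux_append,
        ← hv m]
      exact ih
  have hTval : ∀ m : ℕ, cfVal ((List.range (m + 2)).map f)
      = (cfAux ((List.range m).map e) (e m))⁻¹ := by
    intro m
    rw [List.range_succ_eq_map, List.map_cons, List.map_map, hf0,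
      cfVal_cons _ _ (by simp), zero_add]
    congr 1
    show cfVal ((List.range (m+1)).map (f ∘ Nat.succ)) = _
    rw [List.range_succ, List.map_append, List.map_cons, List.map_nil,
      cfVal_append_singleton]
    rfl
  have habs : ∀ m : ℕ, |cfAux ((List.range m).map e) (e m) - v 0|
      ≤ ((B+1)/(B+2)) ^ (2 * (m - 1)) * B := by
    intro m
    have hd : |e m - v m| ≤ B := by
      rw [abs_sub_le_iff]
      constructor <;> [linarith [he2 m, hv1 m]; linarith [he1 m, hv2 m]]
    have := cfAux_contract B hB ((List.range m).map e) (hmem m) (e m) (v m)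
      (he1 m) (by linarith [he2 m]) (hv1 m) (hv2 m)
    rw [hfix m] at this
    simp only [List.length_map, List.length_range] at this
    refine this.trans ?_
    exact mul_le_mul_of_nonneg_left hd (by positivity)
  have hB2 : (0:ℝ) < B + 2 := by linarith
  have hr0 : (0:ℝ) ≤ ((B+1)/(B+2))^2 := by positivity
  have hr1 : ((B+1)/(B+2))^2 < 1 := by
    have h : (B+1)/(B+2) < 1 := by
      rw [div_lt_one hB2]; linarith
    have h0 : (0:ℝ) ≤ (B+1)/(B+2) := by positivity
    nlinarith
  have h1 : Filter.Tendsto (fun k : ℕ => (((B+1)/(B+2))^2)^k) Filter.atTop (nhds 0) :=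
    tendsto_pow_atTop_nhds_zero_of_lt_one hr0 hr1
  have h2 : Filter.Tendsto (fun m : ℕ => (((B+1)/(B+2))^2)^(m-1)) Filter.atTop (nhds 0) :=
    h1.comp (Filter.tendsto_sub_atTop_nat 1)
  have h3 : Filter.Tendsto (fun m : ℕ => ((B+1)/(B+2))^(2*(m-1)) * B)
      Filter.atTop (nhds 0) := by
    have := h2.mul_const B
    rw [zero_mul] at this
    refine this.congr fun m => ?_
    rw [pow_mul]
  have hT : Filter.Tendsto (fun m => cfAux ((List.range m).map e) (e m)) Filter.atTop
      (nhds (v 0)) := by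
    have h4 : Filter.Tendsto
        (fun m => cfAux ((List.range m).map e) (e m) - v 0) Filter.atTop (nhds 0) :=
      squeeze_zero_norm (fun m => by simpa [Real.norm_eq_abs] using habs m) h3
    have h5 := h4.add_const (v 0)
    simpa using h5
  have hv00 : v 0 ≠ 0 := ne_of_gt (lt_of_lt_of_le one_pos (hv1 0))
  have hTi := hT.inv₀ hv00
  rw [← Filter.tendsto_add_atTop_iff_nat 1]
  exact hTi.congr fun m => (hTval m).symm

set_option maxHeartbeats 1000000 in
/-- For an integer `n ≥ 2`, with `z = (2 − n²)/n < 0`, the periodic simple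
continued fraction `[0; \overline{n−1, 1, n−1}]` converges, the periodic continued
fraction `[0, \overline{(n²−2)/n}]` converges, and both equal `(z + √(z² + 4))/2`.
The `m`-th approximant of `[0, w₁, w₂, …]` is `cfVal [w 0, …, w m]` where `w 0 = 0`. -/
theorem alpha_n_1_1_periodic_cf (n : ℕ) (hn : 2 ≤ n) :
    ((2 - (n : ℝ) ^ 2) / n < 0) ∧
    Filter.Tendsto
      (fun m => cfVal ((List.range (m + 1)).map
        (fun k => if k = 0 then (0 : ℝ) else if k % 3 = 2 then 1 else (n : ℝ) - 1)))
      Filter.atTop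
      (nhds (((2 - (n : ℝ) ^ 2) / n +
        Real.sqrt (((2 - (n : ℝ) ^ 2) / n) ^ 2 + 4)) / 2)) ∧
    Filter.Tendsto
      (fun m => cfVal ((List.range (m + 1)).map
        (fun k => if k = 0 then (0 : ℝ) else ((n : ℝ) ^ 2 - 2) / n)))
      Filter.atTop
      (nhds (((2 - (n : ℝ) ^ 2) / n +
        Real.sqrt (((2 - (n : ℝ) ^ 2) / n) ^ 2 + 4)) / 2)) := by
  have hn2 : (2:ℝ) ≤ n := by exact_mod_cast hn
  have hn0 : (0:ℝ) < n := by linarith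
  set z : ℝ := (2 - (n:ℝ)^2)/n with hz
  set w : ℝ := ((n:ℝ)^2 - 2)/n with hwdef
  have hzw : z = -w := by rw [hz, hwdef]; ring
  have hw1 : 1 ≤ w := by
    rw [hwdef, le_div_iff₀ hn0]
    linarith [sq_nonneg ((n:ℝ) - 2)]
  have hwn : w ≤ n := by
    rw [hwdef, div_le_iff₀ hn0]
    nlinarith
  have hsq : z^2 + 4 = w^2 + 4 := by rw [hzw]; ring
  set s : ℝ := Real.sqrt (w^2+4) with hs
  have hsnn : 0 ≤ s := Real.sqrt_nonneg _
  have hs2 : s^2 = w^2 + 4 := Real.sq_sqrt (by positivity)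
  have hs2' : 2 ≤ s := by nlinarith
  set x : ℝ := (w + s)/2 with hx
  have hx1 : 1 ≤ x := by rw [hx]; linarith
  have hx0 : (0:ℝ) < x := by linarith
  have hq : x^2 = w*x + 1 := by
    rw [hx]
    linear_combination hs2 / 4
  have hxeq : x = w + x⁻¹ := by
    field_simp
    linear_combination hq
  have key : (n:ℝ) * x^2 = ((n:ℝ)^2 - 2) * x + n := by
    rw [hwdef] at hq
    have := hq
    field_simp at this
    linarith
  have hL : (z + Real.sqrt (z^2+4))/2 = x⁻¹ := by
    rw [hsq, ← hs]
    refine eq_inv_of_mul_eq_one_right ?_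
    rw [hx, hzw]
    linear_combination hs2 / 4
  refine ⟨?_, ?_, ?_⟩
  · rw [hz]
    apply div_neg_of_neg_of_pos _ hn0
    linarith [sq_nonneg ((n:ℝ) - 2)]
  · -- CF1
    have hxinv0 : 0 < x⁻¹ := inv_pos.mpr hx0
    set u : ℝ := (n:ℝ) - 1 + x⁻¹ with hu
    have hu1 : 1 ≤ u := by rw [hu]; linarith
    have hu0 : (0:ℝ) < u := by linarith
    have h1u0 : (0:ℝ) < 1 + u⁻¹ := by positivity
    have hveq : x = (n:ℝ) - 1 + (1 + u⁻¹)⁻¹ := by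
      rw [hu]
      have hA : (0:ℝ) < ((n:ℝ)-1)*x + 1 := by nlinarith
      have hB : (0:ℝ) < (n:ℝ)*x + 1 := by nlinarith
      have e1 : (n:ℝ) - 1 + x⁻¹ = (((n:ℝ)-1)*x+1)/x := by
        field_simp
      rw [e1, inv_div]
      have e2 : (1:ℝ) + x/(((n:ℝ)-1)*x+1) = ((n:ℝ)*x+1)/(((n:ℝ)-1)*x+1) := by
        rw [eq_div_iff (ne_of_gt hA), add_mul, div_mul_cancel₀ _ (ne_of_gt hA)]
        ring
      rw [e2, inv_div, eq_comm]
      have e3 : ((n:ℝ)-1) + (((n:ℝ)-1)*x+1)/((n:ℝ)*x+1)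
          = (((n:ℝ)-1)*((n:ℝ)*x+1) + (((n:ℝ)-1)*x+1))/((n:ℝ)*x+1) := by
        rw [eq_div_iff (ne_of_gt hB), add_mul, div_mul_cancel₀ _ (ne_of_gt hB)]
      rw [e3, div_eq_iff (ne_of_gt hB)]
      linear_combination -key
    set v : ℕ → ℝ := fun j =>
      if j % 3 = 0 then x else if j % 3 = 1 then 1 + u⁻¹ else u with hvdef
    have hv1 : ∀ j, 1 ≤ v j := by
      intro j
      simp only [hvdef]
      split_ifs
      · exact hx1
      · have : 0 < u⁻¹ := inv_pos.mpr hu0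
        linarith
      · exact hu1
    have hmain :
        Filter.Tendsto
          (fun m => cfVal ((List.range (m + 1)).map
            (fun k => if k = 0 then (0 : ℝ) else if k % 3 = 2 then 1 else (n : ℝ) - 1)))
          Filter.atTop (nhds (v 0)⁻¹) := by
      apply cf_tendsto n (by linarith)
      · norm_num
      · intro j
        rw [if_neg (Nat.succ_ne_zero j)]
        split_ifs
        · norm_num
        · linarith
      · intro j
        rw [if_neg (Nat.succ_ne_zero j)]
        split_ifs
        · linarith
        · linarith
      · intro j
        have hj : j % 3 = 0 ∨ j % 3 = 1 ∨ j % 3 = 2 := by omega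
        rcases hj with hj | hj | hj
        · have hj1 : (j + 1) % 3 = 1 := by omega
          simp only [hvdef, hj, hj1]
          norm_num
          exact hveq
        · have hj1 : (j + 1) % 3 = 2 := by omega
          simp only [hvdef, hj, hj1]
          norm_num
        · have hj1 : (j + 1) % 3 = 0 := by omega
          simp only [hvdef, hj, hj1]
          norm_num
          exact hu
      · exact hv1
    have hv0 : v 0 = x := by simp [hvdef]
    rw [hv0] at hmain
    rw [hL]
    exact hmain
  · -- CF2
    have hmain :
        Filter.Tendsto
          (fun m => cfVal ((List.range (m + 1)).map
            (fun k => if k = 0 then (0 : ℝ) else w)))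
          Filter.atTop (nhds ((fun _ : ℕ => x) 0)⁻¹) := by
      apply cf_tendsto n (by linarith) _ (fun _ => x)
      · norm_num
      · intro j; rw [if_neg (Nat.succ_ne_zero j)]; exact hw1
      · intro j; rw [if_neg (Nat.succ_ne_zero j)]; exact hwn
      · intro j; rw [if_neg (Nat.succ_ne_zero j)]; exact hxeq
      · intro j; exact hx1
    rw [hL]
    exact hmain
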